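/- arXiv:1509.02140 — 7 statements merged into one kernel-verified Lean document; each statement's English description precedes it below -/
import Mathlib

section
/- For every round r of the Collection Phase and every non-leader node i ≠ ℓ, the energy of i at round r satisfies e_i^r ≤ 1. -/
/-- For every round `r` of the Collection Phase and every non-leader node
`i ≠ ℓ`, the energy of `i` at round `r` satisfies `e_i^r ≤ 1`. -/
theorem collection_phase_energy_le_one
    {V : Type*} [Fintype V] [DecidableEq V]
    (n : ℕ) (hn : 2 ≤ n) (hcard : Fintype.card V = n)
    (ℓ : V) (G : ℕ → SimpleGraph V) [∀ r, DecidableRel (G r).Adj]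
    (Δ : ℕ) (hΔ : 1 ≤ Δ)
    (hdeg : ∀ r v, (G r).degree v ≤ Δ)
    (e : ℕ → V → ℝ)
    (h0ℓ : e 0 ℓ = 0)
    (h0 : ∀ i, i ≠ ℓ → e 0 i = 1)
    (hstep : ∀ r i, i ≠ ℓ →
      e (r + 1) i = e r i * (1 - ((G r).degree i : ℝ) / (2 * Δ))
        + (1 / (2 * Δ)) * ∑ j ∈ ((G r).neighborFinset i).filter (fun j => j ≠ ℓ), e r j)
    (hstepℓ : ∀ r,
      e (r + 1) ℓ = e r ℓ + (1 / (2 * Δ)) * ∑ j ∈ (G r).neighborFinset ℓ, e r j) :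
    ∀ r, ∀ i, i ≠ ℓ → e r i ≤ 1 := by
  intro r
  induction r with
  | zero => intro i hi; rw [h0 i hi]
  | succ r ih =>
    intro i hi
    rw [hstep r i hi]
    have hΔpos : (0:ℝ) < 2 * Δ := by positivity
    have hd : ((G r).degree i : ℝ) ≤ Δ := by exact_mod_cast hdeg r i
    have hdle : ((G r).degree i : ℝ) / (2 * Δ) ≤ 1 := by
      rw [div_le_one hΔpos]
      have : (Δ:ℝ) ≤ 2 * Δ := by have := (Nat.one_le_cast (α := ℝ)).mpr hΔ; nlinarith
      linarith
    have hfac : (0:ℝ) ≤ 1 - ((G r).degree i : ℝ) / (2 * Δ) := by linarith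
    have h1 : e r i * (1 - ((G r).degree i : ℝ) / (2 * Δ)) ≤
        1 - ((G r).degree i : ℝ) / (2 * Δ) := by
      nlinarith [ih i hi]
    have hsum : ∑ j ∈ ((G r).neighborFinset i).filter (fun j => j ≠ ℓ), e r j ≤
        ((G r).degree i : ℝ) := by
      calc ∑ j ∈ ((G r).neighborFinset i).filter (fun j => j ≠ ℓ), e r j
          ≤ ∑ j ∈ ((G r).neighborFinset i).filter (fun j => j ≠ ℓ), (1:ℝ) := by
            apply Finset.sum_le_sum
            intro j hj
            exact ih j (Finset.mem_filter.mp hj).2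
        _ = (((G r).neighborFinset i).filter (fun j => j ≠ ℓ)).card := by
            simp
        _ ≤ ((G r).degree i : ℝ) := by
            rw [← SimpleGraph.card_neighborFinset_eq_degree]
            exact_mod_cast Finset.card_filter_le _ _
    have h2 : (1 / (2 * (Δ:ℝ))) * ∑ j ∈ ((G r).neighborFinset i).filter (fun j => j ≠ ℓ), e r j
        ≤ ((G r).degree i : ℝ) / (2 * Δ) := by
      have h := mul_le_mul_of_nonneg_left hsum
        (show (0:ℝ) ≤ 1 / (2 * Δ) by positivity)
      calc (1 / (2 * (Δ:ℝ))) * _ ≤ 1 / (2 * (Δ:ℝ)) * ((G r).degree i : ℝ) := h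
        _ = ((G r).degree i : ℝ) / (2 * Δ) := by ring
    linarith
end

section
/- For every round r, the total system energy is conserved: Σ_{i ∈ V} e_i^r = n - 1. -/
/-!
Zeroing the leader's coordinate, `g := update (e r) ℓ 0`, one round reads
`e (r + 1) = e r - (1 / 2Δ) • L g` with `L` the Laplacian of `G r`: the leader keeps everything
it receives and passes nothing on. Since `L` is symmetric with `L 1 = 0`, every column of `L` sums
to zero, so `∑ i, (L g) i = 0` and the total energy never changes from its initial value `n - 1`.
-/

open Finset Matrix

namespace SimpleGraph

variable {V : Type*} [Fintype V] [DecidableEq V] (G : SimpleGraph V) [DecidableRel G.Adj]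

theorem sum_lapMatrix_mulVec {R : Type*} [CommRing R] (x : V → R) :
    ∑ i, (G.lapMatrix R *ᵥ x) i = 0 := by
  have hconst : G.lapMatrix R *ᵥ 1 = 0 := G.lapMatrix_mulVec_const_eq_zero
  rw [← one_dotProduct, dotProduct_mulVec, ← (G.isSymm_lapMatrix R).eq, vecMul_transpose,
    hconst, zero_dotProduct]

theorem sum_neighborFinset_update_zero {M : Type*} [AddCommMonoid M] (x : V → M) (i ℓ : V) :
    ∑ j ∈ G.neighborFinset i, Function.update x ℓ 0 j
      = ∑ j ∈ (G.neighborFinset i).filter (fun j => j ≠ ℓ), x j := by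
  rw [sum_filter]
  exact sum_congr rfl fun j _ => by rw [Function.update_apply, ite_not]

theorem filter_ne_neighborFinset_self (ℓ : V) :
    (G.neighborFinset ℓ).filter (fun j => j ≠ ℓ) = G.neighborFinset ℓ := by
  rw [filter_ne', erase_eq_of_notMem (G.notMem_neighborFinset_self ℓ)]

variable {G}

theorem eq_sub_smul_lapMatrix_mulVec_update {ℓ : V} {d : ℝ} {x y : V → ℝ}
    (hstep : ∀ i, i ≠ ℓ → y i = x i * (1 - (G.degree i : ℝ) / d)
      + (1 / d) * ∑ j ∈ (G.neighborFinset i).filter (fun j => j ≠ ℓ), x j)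
    (hstepℓ : y ℓ = x ℓ + (1 / d) * ∑ j ∈ G.neighborFinset ℓ, x j) :
    y = x - (1 / d) • (G.lapMatrix ℝ *ᵥ Function.update x ℓ 0) := by
  funext i
  simp only [Pi.sub_apply, Pi.smul_apply, smul_eq_mul, lapMatrix_mulVec_apply,
    sum_neighborFinset_update_zero]
  by_cases hi : i = ℓ
  · subst hi
    rw [hstepℓ, filter_ne_neighborFinset_self]
    simp
  · rw [hstep i hi, Function.update_of_ne hi]
    ring

theorem sum_eq_of_energy_step {ℓ : V} {d : ℝ} {x y : V → ℝ}
    (hstep : ∀ i, i ≠ ℓ → y i = x i * (1 - (G.degree i : ℝ) / d)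
      + (1 / d) * ∑ j ∈ (G.neighborFinset i).filter (fun j => j ≠ ℓ), x j)
    (hstepℓ : y ℓ = x ℓ + (1 / d) * ∑ j ∈ G.neighborFinset ℓ, x j) :
    ∑ i, y i = ∑ i, x i := by
  rw [eq_sub_smul_lapMatrix_mulVec_update hstep hstepℓ]
  simp only [Pi.sub_apply, Pi.smul_apply, smul_eq_mul, sum_sub_distrib, ← mul_sum,
    sum_lapMatrix_mulVec, mul_zero, sub_zero]

end SimpleGraph

theorem sum_eq_card_sub_one_of_eq_zero_of_ne {V : Type*} [Fintype V] (ℓ : V) (x : V → ℝ)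
    (hℓ : x ℓ = 0) (h : ∀ i, i ≠ ℓ → x i = 1) :
    ∑ i, x i = (Fintype.card V : ℝ) - 1 := by
  classical
  rw [← sum_erase_add _ _ (mem_univ ℓ), hℓ, add_zero,
    sum_congr rfl fun i hi => h i (ne_of_mem_erase hi), sum_const, card_erase_of_mem (mem_univ ℓ),
    card_univ, nsmul_one, Nat.cast_pred (Fintype.card_pos_iff.mpr ⟨ℓ⟩)]

theorem system_energy_conserved_general
    {V : Type*} [Fintype V] [DecidableEq V]
    (n : ℕ) (hcard : Fintype.card V = n)
    (ℓ : V) (G : ℕ → SimpleGraph V) [∀ r, DecidableRel (G r).Adj]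
    (Δ : ℕ)
    (e : ℕ → V → ℝ)
    (h0ℓ : e 0 ℓ = 0)
    (h0 : ∀ i, i ≠ ℓ → e 0 i = 1)
    (hstep : ∀ r i, i ≠ ℓ →
      e (r + 1) i = e r i * (1 - ((G r).degree i : ℝ) / (2 * Δ))
        + (1 / (2 * Δ)) * ∑ j ∈ ((G r).neighborFinset i).filter (fun j => j ≠ ℓ), e r j)
    (hstepℓ : ∀ r,
      e (r + 1) ℓ = e r ℓ + (1 / (2 * Δ)) * ∑ j ∈ (G r).neighborFinset ℓ, e r j) :
    ∀ r, ∑ i, e r i = (n : ℝ) - 1 := by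
  intro r
  induction r with
  | zero => rw [sum_eq_card_sub_one_of_eq_zero_of_ne ℓ (e 0) h0ℓ h0, hcard]
  | succ r ih => rw [SimpleGraph.sum_eq_of_energy_step (hstep r) (hstepℓ r), ih]

/-- For every round `r`, the total system energy is conserved:
`Σ_{i ∈ V} e_i^r = n - 1`. -/
theorem system_energy_conserved
    {V : Type*} [Fintype V] [DecidableEq V]
    (n : ℕ) (hn : 2 ≤ n) (hcard : Fintype.card V = n)
    (ℓ : V) (G : ℕ → SimpleGraph V) [∀ r, DecidableRel (G r).Adj]
    (Δ : ℕ) (hΔ : 1 ≤ Δ)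
    (hdeg : ∀ r v, (G r).degree v ≤ Δ)
    (e : ℕ → V → ℝ)
    (h0ℓ : e 0 ℓ = 0)
    (h0 : ∀ i, i ≠ ℓ → e 0 i = 1)
    (hstep : ∀ r i, i ≠ ℓ →
      e (r + 1) i = e r i * (1 - ((G r).degree i : ℝ) / (2 * Δ))
        + (1 / (2 * Δ)) * ∑ j ∈ ((G r).neighborFinset i).filter (fun j => j ≠ ℓ), e r j)
    (hstepℓ : ∀ r,
      e (r + 1) ℓ = e r ℓ + (1 / (2 * Δ)) * ∑ j ∈ (G r).neighborFinset ℓ, e r j) :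
    ∀ r, ∑ i, e r i = (n : ℝ) - 1 :=
  system_energy_conserved_general n hcard ℓ G Δ e h0ℓ h0 hstep hstepℓ
end

section
/- For every round r, all energies are nonnegative (e_i^r ≥ 0 for every node i); consequently the leader's energy is non-decreasing in r (e_ℓ^{r+1} ≥ e_ℓ^r for all r) and satisfies e_ℓ^r ≤ n - 1 for every round r. -/
/-!
The round update is `e ↦ e - c • L ẽ`, where `L` is the Laplacian of the round's graph,
`c = 1 / (2Δ)` and `ẽ` is `e` with the leader's entry replaced by `0`. Since `1ᵀ L = 0`, the
total energy is conserved and equals its initial value `n - 1`. A non-leader keeps the fraction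
`1 - c · deg ≥ 0` of its energy and receives nonnegative amounts from its neighbours, while
the leader only receives; so energies stay nonnegative, the leader's energy grows, and it is
bounded by the total.
-/

open Finset Matrix

theorem Finset.sum_update_zero_eq_sum_filter_ne {V M : Type*} [DecidableEq V] [AddCommMonoid M]
    {ℓ : V} {x : V → M} (s : Finset V) :
    ∑ j ∈ s, Function.update x ℓ 0 j = ∑ j ∈ s.filter (· ≠ ℓ), x j := by
  rw [sum_filter]
  refine sum_congr rfl fun j _ => ?_
  rw [Function.update_apply]
  split_ifs <;> simp_all

namespace SimpleGraph

variable {V : Type*} [Fintype V] [DecidableEq V] (G : SimpleGraph V) [DecidableRel G.Adj]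

/-- One round of energy transfer with sink `ℓ`: zeroing the sink's entry before applying the
Laplacian makes `ℓ` receive from its neighbours without emitting. -/
noncomputable def transferStep (ℓ : V) (c : ℝ) (x : V → ℝ) : V → ℝ :=
  x - c • (G.lapMatrix ℝ *ᵥ Function.update x ℓ 0)

variable {G} {ℓ : V} {c : ℝ} {x : V → ℝ}

theorem transferStep_apply_of_ne {i : V} (hi : i ≠ ℓ) :
    G.transferStep ℓ c x i = x i * (1 - c * G.degree i)
      + c * ∑ j ∈ (G.neighborFinset i).filter (· ≠ ℓ), x j := by
  rw [transferStep, Pi.sub_apply, Pi.smul_apply, lapMatrix_mulVec_apply,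
    sum_update_zero_eq_sum_filter_ne, Function.update_of_ne hi, smul_eq_mul]
  ring

theorem transferStep_apply_self :
    G.transferStep ℓ c x ℓ = x ℓ + c * ∑ j ∈ G.neighborFinset ℓ, x j := by
  have hsink :
      ∑ j ∈ G.neighborFinset ℓ, Function.update x ℓ 0 j = ∑ j ∈ G.neighborFinset ℓ, x j :=
    sum_congr rfl fun j hj =>
      Function.update_of_ne (G.ne_of_adj ((G.mem_neighborFinset ℓ j).1 hj)).symm _ _
  rw [transferStep, Pi.sub_apply, Pi.smul_apply, lapMatrix_mulVec_apply, hsink,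
    Function.update_self, smul_eq_mul]
  ring

theorem sum_transferStep : ∑ i, G.transferStep ℓ c x i = ∑ i, x i := by
  simp only [transferStep, Pi.sub_apply, Pi.smul_apply, smul_eq_mul, sum_sub_distrib, ← mul_sum]
  rw [sum_lapMatrix_mulVec, mul_zero, sub_zero]

theorem transferStep_nonneg (hc : 0 ≤ c) (hdeg : ∀ v, c * G.degree v ≤ 1) (hx : 0 ≤ x) :
    0 ≤ G.transferStep ℓ c x := by
  intro i
  set y := Function.update x ℓ 0
  have hy : 0 ≤ y := fun j => by
    simp only [y, Function.update_apply]; split_ifs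
    exacts [le_rfl, hx j]
  have hyx : y i ≤ x i := by
    simp only [y, Function.update_apply]; split_ifs
    exacts [hx i, le_rfl]
  -- the outflow `c · deg i · y i` is at most `y i ≤ x i`; the inflow is nonnegative
  have hout : c * G.degree i * y i ≤ x i :=
    (mul_le_of_le_one_left (hy i) (hdeg i)).trans hyx
  have hin : 0 ≤ c * ∑ j ∈ G.neighborFinset i, y j :=
    mul_nonneg hc (sum_nonneg fun j _ => hy j)
  simp only [transferStep, Pi.sub_apply, Pi.smul_apply, lapMatrix_mulVec_apply, smul_eq_mul,
    Pi.zero_apply]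
  linarith

theorem le_transferStep_self (hc : 0 ≤ c) (hx : 0 ≤ x) : x ℓ ≤ G.transferStep ℓ c x ℓ := by
  rw [transferStep_apply_self]
  exact le_add_of_nonneg_right (mul_nonneg hc (sum_nonneg fun j _ => hx j))

end SimpleGraph

open SimpleGraph

theorem energy_nonneg_leader_mono_le_general
    {V : Type*} [Fintype V] [DecidableEq V]
    (n : ℕ) (hcard : Fintype.card V = n)
    (ℓ : V) (G : ℕ → SimpleGraph V) [∀ r, DecidableRel (G r).Adj]
    (Δ : ℕ)
    (hdeg : ∀ r v, (G r).degree v ≤ Δ)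
    (e : ℕ → V → ℝ)
    (h0ℓ : e 0 ℓ = 0)
    (h0 : ∀ i, i ≠ ℓ → e 0 i = 1)
    (hstep : ∀ r i, i ≠ ℓ →
      e (r + 1) i = e r i * (1 - ((G r).degree i : ℝ) / (2 * Δ))
        + (1 / (2 * Δ)) * ∑ j ∈ ((G r).neighborFinset i).filter (fun j => j ≠ ℓ), e r j)
    (hstepℓ : ∀ r,
      e (r + 1) ℓ = e r ℓ + (1 / (2 * Δ)) * ∑ j ∈ (G r).neighborFinset ℓ, e r j) :
    (∀ r, ∀ i, 0 ≤ e r i) ∧ (∀ r, e r ℓ ≤ e (r + 1) ℓ) ∧ (∀ r, e r ℓ ≤ (n : ℝ) - 1) := by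
  set c : ℝ := 1 / (2 * Δ)
  have hc : 0 ≤ c := by positivity
  have hcdeg : ∀ r v, c * (G r).degree v ≤ 1 := fun r v => by
    rw [one_div_mul_eq_div]
    exact div_le_one_of_le₀ (by have := hdeg r v; norm_cast; omega) (by positivity)
  have hround : ∀ r, e (r + 1) = (G r).transferStep ℓ c (e r) := fun r => funext fun i => by
    by_cases hi : i = ℓ
    · rw [hi, hstepℓ, transferStep_apply_self]
    · rw [hstep r i hi, transferStep_apply_of_ne hi]
      simp only [c]
      ring
  have hnonneg : ∀ r, 0 ≤ e r := fun r => by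
    induction r with
    | zero => intro i; by_cases hi : i = ℓ <;> simp [hi, h0ℓ, h0]
    | succ r ih => rw [hround]; exact transferStep_nonneg hc (hcdeg r) ih
  have hsum : ∀ r, ∑ i, e r i = (n : ℝ) - 1 := fun r => by
    induction r with
    | zero =>
      rw [← sum_erase_add _ _ (mem_univ ℓ), h0ℓ, add_zero,
        sum_congr rfl fun i hi => h0 i (ne_of_mem_erase hi), sum_const,
        card_erase_of_mem (mem_univ ℓ), card_univ, hcard, nsmul_one,
        Nat.cast_pred (hcard ▸ Fintype.card_pos_iff.2 ⟨ℓ⟩)]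
    | succ r ih => rw [hround, sum_transferStep, ih]
  refine ⟨hnonneg, fun r => ?_, fun r => ?_⟩
  · rw [hround]
    exact le_transferStep_self hc (hnonneg r)
  · exact hsum r ▸ single_le_sum (fun i _ => hnonneg r i) (mem_univ ℓ)

/-- For every round `r`, all energies are nonnegative; consequently the
leader's energy is non-decreasing in `r` and satisfies `e_ℓ^r ≤ n - 1` for every round `r`. -/
theorem energy_nonneg_leader_mono_le
    {V : Type*} [Fintype V] [DecidableEq V]
    (n : ℕ) (hn : 2 ≤ n) (hcard : Fintype.card V = n)
    (ℓ : V) (G : ℕ → SimpleGraph V) [∀ r, DecidableRel (G r).Adj]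
    (Δ : ℕ) (hΔ : 1 ≤ Δ)
    (hdeg : ∀ r v, (G r).degree v ≤ Δ)
    (e : ℕ → V → ℝ)
    (h0ℓ : e 0 ℓ = 0)
    (h0 : ∀ i, i ≠ ℓ → e 0 i = 1)
    (hstep : ∀ r i, i ≠ ℓ →
      e (r + 1) i = e r i * (1 - ((G r).degree i : ℝ) / (2 * Δ))
        + (1 / (2 * Δ)) * ∑ j ∈ ((G r).neighborFinset i).filter (fun j => j ≠ ℓ), e r j)
    (hstepℓ : ∀ r,
      e (r + 1) ℓ = e r ℓ + (1 / (2 * Δ)) * ∑ j ∈ (G r).neighborFinset ℓ, e r j) :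
    (∀ r, ∀ i, 0 ≤ e r i) ∧ (∀ r, e r ℓ ≤ e (r + 1) ℓ) ∧ (∀ r, e r ℓ ≤ (n : ℝ) - 1) :=
  energy_nonneg_leader_mono_le_general n hcard ℓ G Δ hdeg e h0ℓ h0 hstep hstepℓ
end

section
/- If the set of informed nodes is initially a nonempty set S 0, then for every round r ≥ |V| - |S 0| the informed set S r equals all of V; that is, after |V| - |S 0| rounds in which every informed node broadcasts the message, all nodes hold the message. -/
/-- Along a walk from a point in `A` to a point outside `A`, some edge crosses. -/
lemma walk_cross {V : Type*} [DecidableEq V] {G : SimpleGraph V} {A : Finset V}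
    {u v : V} (w : G.Walk u v) (hu : u ∈ A) (hv : v ∉ A) :
    ∃ a ∈ A, ∃ b ∉ A, G.Adj a b := by
  induction w with
  | nil => exact absurd hu hv
  | @cons x y z h p ih =>
    by_cases hy : y ∈ A
    · exact ih hy hv
    · exact ⟨x, hu, y, hy, h⟩

/-- Broadcast under 1-interval connectivity. If the set of informed nodes
is initially a nonempty set `S 0`, then for every round `r ≥ |V| - |S 0|` the informed
set `S r` equals all of `V`. -/
theorem broadcast_floods_network
    {V : Type*} [Fintype V] [DecidableEq V]
    (G : ℕ → SimpleGraph V) [∀ r, DecidableRel (G r).Adj]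
    (hconn : ∀ r, (G r).Connected)
    (S : ℕ → Finset V)
    (hS0 : (S 0).Nonempty)
    (hstep : ∀ r, S (r + 1) = S r ∪ Finset.univ.filter (fun v => ∃ u ∈ S r, (G r).Adj u v)) :
    ∀ r, Fintype.card V - (S 0).card ≤ r → S r = Finset.univ := by
  have hsub : ∀ r, S r ⊆ S (r + 1) := by
    intro r
    rw [hstep r]; exact Finset.subset_union_left
  have hne : ∀ r, (S r).Nonempty := by
    intro r
    induction r with
    | zero => exact hS0
    | succ n ih => exact ih.mono (hsub n)
  have key : ∀ r, S r = Finset.univ ∨ (S 0).card + r ≤ (S r).card := by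
    intro r
    induction r with
    | zero => right; simp
    | succ n ih =>
      rcases ih with h | h
      · left
        have := hsub n
        rw [h] at this
        exact Finset.eq_univ_iff_forall.mpr fun v => this (Finset.mem_univ v)
      · by_cases hu : S n = Finset.univ
        · left
          have := hsub n
          rw [hu] at this
          exact Finset.eq_univ_iff_forall.mpr fun v => this (Finset.mem_univ v)
        · right
          -- there is a crossing edge
          obtain ⟨x, hx⟩ := hne n
          obtain ⟨y, hy⟩ : ∃ y, y ∉ S n := by
            by_contra hc
            push_neg at hc
            exact hu (Finset.eq_univ_iff_forall.mpr hc)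
          obtain ⟨w⟩ := (hconn n) x y
          obtain ⟨a, ha, b, hb, hab⟩ := walk_cross w hx hy
          have hbmem : b ∈ S (n + 1) := by
            rw [hstep n]
            exact Finset.mem_union_right _ (Finset.mem_filter.mpr ⟨Finset.mem_univ b, a, ha, hab⟩)
          have hlt : (S n).card < (S (n + 1)).card := by
            apply Finset.card_lt_card
            exact ⟨hsub n, fun hsub' => hb (hsub' hbmem)⟩
          omega
  intro r hr
  rcases key r with h | h
  · exact h
  · have := Finset.card_le_univ (S 0)
    have h2 : Fintype.card V ≤ (S r).card := by omega
    exact Finset.eq_univ_of_card _ (le_antisymm (Finset.card_le_univ _) h2)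
end

section
/- Let V be a finite type with |V| = n, let ℓ ∈ V, let k ≥ 2 be a natural number and c > 1 a real number, and let e : V → ℝ satisfy e i ≤ 1 for every i ≠ ℓ, Σ_{i ∈ V} e i = n - 1, and e ℓ ≤ k - 1. Then the number of nodes with energy at most 1/k^c satisfies |{ i ∈ V | e i ≤ 1/k^c }| ≤ (1 + e ℓ)/(1 - 1/k^c), and hence |{ i ∈ V | e i ≤ 1/k^c }| ≤ k^{c+1}/(k^c - 1). -/
/-- If `|V| = n`, `ℓ ∈ V`, `k ≥ 2`, `c > 1`, `e i ≤ 1` for `i ≠ ℓ`,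
`Σ_{i ∈ V} e i = n - 1` and `e ℓ ≤ k - 1`, then the number of nodes with energy at most
`1/k^c` is at most `(1 + e ℓ)/(1 - 1/k^c)`, and hence at most `k^(c+1)/(k^c - 1)`. -/
theorem low_energy_nodes_card_bound
    {V : Type*} [Fintype V] [DecidableEq V]
    (n : ℕ) (hcard : Fintype.card V = n)
    (ℓ : V) (k : ℕ) (hk : 2 ≤ k) (c : ℝ) (hc : 1 < c)
    (e : V → ℝ)
    (he : ∀ i, i ≠ ℓ → e i ≤ 1)
    (hsum : ∑ i, e i = (n : ℝ) - 1)
    (heℓ : e ℓ ≤ (k : ℝ) - 1) :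
    ((Finset.univ.filter (fun i => e i ≤ 1 / (k : ℝ) ^ c)).card : ℝ)
        ≤ (1 + e ℓ) / (1 - 1 / (k : ℝ) ^ c) ∧
      ((Finset.univ.filter (fun i => e i ≤ 1 / (k : ℝ) ^ c)).card : ℝ)
        ≤ (k : ℝ) ^ (c + 1) / ((k : ℝ) ^ c - 1) := by
  have hk2 : (2 : ℝ) ≤ (k : ℝ) := by exact_mod_cast hk
  have hkpos : (0 : ℝ) < (k : ℝ) := by linarith
  set K : ℝ := (k : ℝ) ^ c with hKdef
  have hK : 1 < K := by
    rw [hKdef]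
    have := Real.one_lt_rpow_iff_of_pos hkpos (y := c)
    rw [this]
    left
    exact ⟨by linarith, by linarith⟩
  have h0 : (0 : ℝ) < 1 - 1 / K := by
    have : 1 / K < 1 := by
      rw [div_lt_one (by linarith)]; linarith
    linarith
  set S : Finset V := Finset.univ.filter (fun i => e i ≤ 1 / K) with hS
  set S' : Finset V := S.erase ℓ with hS'
  set C : Finset V := Finset.univ \ S' with hC
  have hℓC : ℓ ∈ C := by
    simp [hC, hS']
  -- cardinalities
  have hcardC : (C.card : ℝ) = n - S'.card := by
    have : C.card + S'.card = n := by
      rw [hC, Finset.card_sdiff_add_card_eq_card (Finset.subset_univ _),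
        Finset.card_univ, hcard]
    have := congrArg (Nat.cast : ℕ → ℝ) this
    push_cast at this
    linarith
  have hcardCe : ((C.erase ℓ).card : ℝ) = n - S'.card - 1 := by
    have h1 : (C.erase ℓ).card + 1 = C.card := by
      rw [Finset.card_erase_add_one hℓC]
    have := congrArg (Nat.cast : ℕ → ℝ) h1
    push_cast at this
    linarith [hcardC]
  -- sum bounds
  have hsumS' : ∑ i ∈ S', e i ≤ S'.card * (1 / K) := by
    have := Finset.sum_le_card_nsmul S' e (1 / K) (fun i hi => by
      have : i ∈ S := Finset.mem_of_mem_erase hi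
      simpa [hS] using this)
    simpa [nsmul_eq_mul] using this
  have hsumCe : ∑ i ∈ C.erase ℓ, e i ≤ (C.erase ℓ).card * 1 := by
    have := Finset.sum_le_card_nsmul (C.erase ℓ) e 1 (fun i hi => by
      exact he i (Finset.ne_of_mem_erase hi))
    simpa [nsmul_eq_mul] using this
  have hsumC : ∑ i ∈ C, e i = e ℓ + ∑ i ∈ C.erase ℓ, e i := by
    rw [Finset.add_sum_erase _ _ hℓC]
  have hsplit : ∑ i ∈ C, e i + ∑ i ∈ S', e i = (n : ℝ) - 1 := by
    rw [hC, Finset.sum_sdiff_eq_sub (Finset.subset_univ _)]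
    rw [hsum]; ring
  -- key inequality
  have hkey : (S'.card : ℝ) * (1 - 1 / K) ≤ e ℓ := by
    nlinarith [hsumS', hsumCe, hsumC, hsplit, hcardCe]
  have hmm' : (S.card : ℝ) ≤ S'.card + 1 := by
    have : S.card ≤ (insert ℓ S').card := by
      apply Finset.card_le_card
      intro x hx
      rcases eq_or_ne x ℓ with h | h
      · simp [h]
      · exact Finset.mem_insert_of_mem (Finset.mem_erase.mpr ⟨h, hx⟩)
    have h2 := this.trans (Finset.card_insert_le _ _)
    exact_mod_cast h2
  have hfirst : ((S.card : ℝ)) ≤ (1 + e ℓ) / (1 - 1 / K) := by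
    rw [le_div_iff₀ h0]
    have h1 := mul_le_mul_of_nonneg_right hmm' h0.le
    have h2 : ((S'.card : ℝ) + 1) * (1 - 1 / K) = S'.card * (1 - 1 / K) + (1 - 1 / K) := by ring
    have h3 : (0:ℝ) < 1 / K := by positivity
    linarith
  refine ⟨hfirst, hfirst.trans ?_⟩
  have hKne : K ≠ 0 := by positivity
  have heq : (k : ℝ) ^ (c + 1) = K * k := by
    rw [hKdef, Real.rpow_add hkpos, Real.rpow_one]
  rw [heq]
  rw [div_le_div_iff₀ h0 (by linarith)]
  have hsimp : K * (1 - 1 / K) = K - 1 := by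
    field_simp
  nlinarith [heℓ, hK]
end

section
/- For every natural number n > 3 and every real number c > log₂ 5, the total number of rounds spent in the Verification and Notification phases over all iterations satisfies Σ_{k=2}^{n} ( ⌈1 + k/(1 - 1/k^c)⌉ + k ) < n(n+3) + ln n - 4, where the sum, the ceiling, and the bound are over real values and k ranges over the integers from 2 to n. -/
lemma sum_aux (n : ℕ) (hn : 2 ≤ n) :
    ∑ k ∈ Finset.Icc 2 n, (2 * (k : ℝ) + 2) = (n : ℝ) * n + 3 * n - 4 := by
  induction n, hn using Nat.le_induction with
  | base => norm_num
  | succ m hm ih =>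
      rw [Finset.sum_Icc_succ_top (by omega), ih]
      push_cast
      ring

/-- For every natural `n > 3` and real `c > log₂ 5`, the total number of
rounds of the Verification and Notification phases over all iterations satisfies
`Σ_{k=2}^{n} (⌈1 + k/(1 - 1/k^c)⌉ + k) < n(n+3) + ln n - 4`. -/
theorem verification_notification_rounds_bound
    (n : ℕ) (hn : 3 < n) (c : ℝ) (hc : Real.log 5 / Real.log 2 < c) :
    ∑ k ∈ Finset.Icc 2 n,
        ((⌈(1 : ℝ) + (k : ℝ) / (1 - 1 / (k : ℝ) ^ c)⌉ : ℝ) + (k : ℝ))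
      < (n : ℝ) * ((n : ℝ) + 3) + Real.log n - 4 := by
  have hc2 : (2 : ℝ) < c := by
    have h4 : Real.log 4 < Real.log 5 := Real.log_lt_log (by norm_num) (by norm_num)
    have h2 : (0 : ℝ) < Real.log 2 := Real.log_pos (by norm_num)
    have : (2 : ℝ) < Real.log 5 / Real.log 2 := by
      rw [lt_div_iff₀ h2]
      calc 2 * Real.log 2 = Real.log 4 := by
            rw [show (4:ℝ) = 2 ^ (2:ℕ) by norm_num, Real.log_pow]; ring
        _ < Real.log 5 := h4
    linarith
  have key : ∀ k ∈ Finset.Icc 2 n,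
      ((⌈(1 : ℝ) + (k : ℝ) / (1 - 1 / (k : ℝ) ^ c)⌉ : ℝ) + (k : ℝ)) ≤ 2 * k + 2 := by
    intro k hk
    simp only [Finset.mem_Icc] at hk
    have hk2 : (2 : ℝ) ≤ k := by exact_mod_cast hk.1
    have hk0 : (0 : ℝ) < k := by linarith
    have hk1 : (1 : ℝ) ≤ k := by linarith
    -- k + 1 ≤ k ^ c
    have hpow : (k : ℝ) + 1 ≤ (k : ℝ) ^ c := by
      have h1 : (k : ℝ) ^ (2 : ℝ) ≤ (k : ℝ) ^ c :=
        Real.rpow_le_rpow_of_exponent_le hk1 (le_of_lt hc2)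
      have h2 : (k : ℝ) ^ (2 : ℝ) = k * k := by
        rw [show (2:ℝ) = ((2:ℕ):ℝ) by norm_num, Real.rpow_natCast]; ring
      have h3 : 2 * (k : ℝ) ≤ (k : ℝ) * k := mul_le_mul_of_nonneg_right hk2 (le_of_lt hk0)
      have h4 : (k : ℝ) + 1 ≤ 2 * k := by linarith
      calc (k : ℝ) + 1 ≤ 2 * k := h4
        _ ≤ (k : ℝ) * k := h3
        _ = (k : ℝ) ^ (2 : ℝ) := h2.symm
        _ ≤ (k : ℝ) ^ c := h1
    have hpow0 : (0 : ℝ) < (k : ℝ) ^ c := by positivity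
    have hden : (0 : ℝ) < 1 - 1 / (k : ℝ) ^ c := by
      have : 1 / (k : ℝ) ^ c < 1 := by
        rw [div_lt_one hpow0]; linarith
      linarith
    -- k / (1 - 1/k^c) ≤ k + 1
    have hfrac : (k : ℝ) / (1 - 1 / (k : ℝ) ^ c) ≤ (k : ℝ) + 1 := by
      rw [div_le_iff₀ hden]
      have h3 : ((k : ℝ) + 1) / (k : ℝ) ^ c ≤ 1 := by
        rw [div_le_one hpow0]; exact hpow
      have h4 : ((k : ℝ) + 1) * (1 - 1 / (k : ℝ) ^ c)
          = (k : ℝ) + 1 - ((k : ℝ) + 1) / (k : ℝ) ^ c := by ring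
      rw [h4]; linarith
    have hceil : (⌈(1 : ℝ) + (k : ℝ) / (1 - 1 / (k : ℝ) ^ c)⌉ : ℝ) ≤ (k : ℝ) + 2 := by
      have : ⌈(1 : ℝ) + (k : ℝ) / (1 - 1 / (k : ℝ) ^ c)⌉ ≤ (k : ℤ) + 2 := by
        rw [Int.ceil_le]; push_cast; linarith
      exact_mod_cast this
    linarith
  have hsum := Finset.sum_le_sum key
  have heq := sum_aux n (by omega)
  have hlog : 0 < Real.log n := Real.log_pos (by exact_mod_cast (by omega : 1 < n))
  calc ∑ k ∈ Finset.Icc 2 n,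
        ((⌈(1 : ℝ) + (k : ℝ) / (1 - 1 / (k : ℝ) ^ c)⌉ : ℝ) + (k : ℝ))
      ≤ ∑ k ∈ Finset.Icc 2 n, (2 * (k : ℝ) + 2) := hsum
    _ = (n : ℝ) * n + 3 * n - 4 := heq
    _ < (n : ℝ) * ((n : ℝ) + 3) + Real.log n - 4 := by nlinarith
end

section
/- For every natural number n > 6 and every natural number Δ with 1 ≤ Δ ≤ n - 1, it holds that n(3n+7)/2 + ln n - 5 + Σ_{k=2}^{n} k · (2Δ)^k · ln k < (2Δ)^{n+1} · (n+1) · ln(n+1) / ln(2Δ). (This is the arithmetic content of the running-time bound r < (2Δ)^{n+1}(n+1)ln(n+1)/ln(2Δ) of the Counting Protocol.) -/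
lemma counting_aux_pow : ∀ n : ℕ, 7 ≤ n → 3*n^2 + 9*n ≤ 2^(n+2) := by
  intro n hn
  induction n, hn using Nat.le_induction with
  | base => norm_num
  | succ m hm ih =>
    have h2 : 6*m + 12 ≤ 2^(m+2) := le_trans (by nlinarith) ih
    calc 3*(m+1)^2 + 9*(m+1) = (3*m^2+9*m) + (6*m+12) := by ring
      _ ≤ 2^(m+2) + 2^(m+2) := Nat.add_le_add ih h2
      _ = 2^(m+1+2) := by ring

/-- For every natural `n > 6` and natural `Δ` with `1 ≤ Δ ≤ n - 1`,
`n(3n+7)/2 + ln n - 5 + Σ_{k=2}^{n} k·(2Δ)^k·ln k < (2Δ)^(n+1)·(n+1)·ln(n+1)/ln(2Δ)`.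
This is the arithmetic content of the running-time bound of the Counting Protocol. -/
theorem counting_protocol_running_time_bound
    (n Δ : ℕ) (hn : 6 < n) (hΔ1 : 1 ≤ Δ) (hΔn : Δ ≤ n - 1) :
    (n : ℝ) * (3 * (n : ℝ) + 7) / 2 + Real.log n - 5
        + ∑ k ∈ Finset.Icc 2 n, (k : ℝ) * (((2 * Δ) ^ k : ℕ) : ℝ) * Real.log k
      < (((2 * Δ) ^ (n + 1) : ℕ) : ℝ) * ((n : ℝ) + 1) * Real.log ((n : ℝ) + 1)
          / Real.log (2 * (Δ : ℝ)) := by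
  set Q : ℝ := 2 * (Δ : ℝ) with hQdef
  have hQ2 : (2:ℝ) ≤ Q := by
    have : (1:ℝ) ≤ (Δ:ℝ) := by exact_mod_cast hΔ1
    rw [hQdef]; linarith
  have hQ0 : (0:ℝ) < Q := by linarith
  have hQ1 : (1:ℝ) < Q := by linarith
  have hQm1 : (0:ℝ) < Q - 1 := by linarith
  have hcast : ∀ k : ℕ, (((2 * Δ) ^ k : ℕ) : ℝ) = Q ^ k := by
    intro k; rw [hQdef]; push_cast; ring
  have hn7 : (7:ℝ) ≤ (n:ℝ) := by exact_mod_cast hn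
  have hlogn_pos : 0 < Real.log n := Real.log_pos (by linarith)
  have hlogn_le : Real.log n ≤ Real.log ((n:ℝ)+1) :=
    Real.log_le_log (by linarith) (by linarith)
  have hL2 : (2:ℝ) ≤ Real.log ((n:ℝ)+1) := by
    have h8 : Real.log 8 ≤ Real.log ((n:ℝ)+1) :=
      Real.log_le_log (by norm_num) (by linarith)
    have h83 : Real.log 8 = 3 * Real.log 2 := by
      rw [show (8:ℝ) = 2^3 by norm_num, Real.log_pow]; push_cast; ring
    have hl2 : (0.6931471803:ℝ) < Real.log 2 := Real.log_two_gt_d9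
    linarith
  set L : ℝ := Real.log ((n:ℝ)+1) with hLdef
  set A : ℝ := Q^(n+1) / (Q-1) with hAdef
  have hA0 : 0 ≤ A := div_nonneg (pow_nonneg hQ0.le _) hQm1.le
  -- step 1: sum bound
  have hS : ∑ k ∈ Finset.Icc 2 n, (k : ℝ) * (((2 * Δ) ^ k : ℕ) : ℝ) * Real.log k
      ≤ (n:ℝ) * Real.log n * ∑ k ∈ Finset.Icc 2 n, Q ^ k := by
    rw [Finset.mul_sum]
    apply Finset.sum_le_sum
    intro k hk
    obtain ⟨hk2, hkn⟩ := Finset.mem_Icc.mp hk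
    rw [hcast k]
    have h1 : (k:ℝ) ≤ (n:ℝ) := by exact_mod_cast hkn
    have h2 : Real.log k ≤ Real.log n :=
      Real.log_le_log (by exact_mod_cast Nat.lt_of_lt_of_le (by norm_num) hk2) h1
    have h3 : 0 ≤ Real.log k := Real.log_nonneg (by exact_mod_cast hk2.trans' (by norm_num))
    have h4 : (0:ℝ) ≤ Q ^ k := pow_nonneg hQ0.le k
    have h5 : (0:ℝ) ≤ (k:ℝ) := Nat.cast_nonneg k
    have h6 : (k:ℝ) * Real.log k ≤ (n:ℝ) * Real.log n :=
      mul_le_mul h1 h2 h3 (le_trans h5 h1)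
    calc (k:ℝ) * Q^k * Real.log k = ((k:ℝ) * Real.log k) * Q^k := by ring
      _ ≤ ((n:ℝ) * Real.log n) * Q^k := mul_le_mul_of_nonneg_right h6 h4
  -- step 2: geometric sum
  have hgeom : ∑ k ∈ Finset.Icc 2 n, Q ^ k ≤ A := by
    have hsub : Finset.Icc 2 n ⊆ Finset.range (n+1) := by
      intro k hk
      simp only [Finset.mem_Icc] at hk
      simp only [Finset.mem_range]; omega
    have h1 : ∑ k ∈ Finset.Icc 2 n, Q ^ k ≤ ∑ k ∈ Finset.range (n+1), Q ^ k :=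
      Finset.sum_le_sum_of_subset_of_nonneg hsub
        (fun k _ _ => pow_nonneg hQ0.le k)
    rw [geom_sum_eq (ne_of_gt hQ1) (n+1)] at h1
    have h3 : (Q^(n+1) - 1)/(Q - 1) ≤ A := by
      rw [hAdef]
      gcongr
      linarith
    linarith
  -- step 3: RHS lower bound via log Q ≤ Q - 1
  have hlogQpos : 0 < Real.log Q := Real.log_pos hQ1
  have hlogQle : Real.log Q ≤ Q - 1 := Real.log_le_sub_one_of_pos hQ0
  have hXnn : 0 ≤ Q^(n+1) * ((n:ℝ)+1) * L :=
    mul_nonneg (mul_nonneg (pow_nonneg hQ0.le _) (by linarith)) (by linarith)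
  have hRHS : Q^(n+1) * ((n:ℝ)+1) * L / (Q-1) ≤ Q^(n+1) * ((n:ℝ)+1) * L / Real.log Q :=
    div_le_div_of_nonneg_left hXnn hlogQpos hlogQle
  -- step 4: polynomial bound: poly < 2 * 2^n
  have hpoly : (n : ℝ) * (3 * (n : ℝ) + 7) / 2 + Real.log n - 5 < 2 * 2^n := by
    have hnat : 3*n^2 + 9*n ≤ 2^(n+2) := counting_aux_pow n hn
    have hcast2 : 3*(n:ℝ)^2 + 9*(n:ℝ) ≤ 2^(n+2) := by exact_mod_cast hnat
    have hlog_lt : Real.log n ≤ (n:ℝ) - 1 := Real.log_le_sub_one_of_pos (by linarith)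
    have h42 : (2:ℝ)^(n+2) = 4 * 2^n := by ring
    nlinarith
  -- step 5: 2 * 2^n ≤ L * A
  have hQn : (2:ℝ)^n ≤ Q^n := pow_le_pow_left₀ (by norm_num) hQ2 n
  have hQnA : Q^n ≤ A := by
    rw [hAdef, le_div_iff₀ hQm1]
    calc Q^n * (Q-1) ≤ Q^n * Q :=
          mul_le_mul_of_nonneg_left (by linarith) (pow_nonneg hQ0.le n)
      _ = Q^(n+1) := (pow_succ Q n).symm
  have hgap : 2 * 2^n ≤ L * A := by
    calc (2:ℝ) * 2^n ≤ L * Q^n :=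
          mul_le_mul hL2 hQn (pow_nonneg (by norm_num) n) (by linarith)
      _ ≤ L * A := mul_le_mul_of_nonneg_left hQnA (by linarith)
  -- combine
  have hsum : ∑ k ∈ Finset.Icc 2 n, (k : ℝ) * (((2 * Δ) ^ k : ℕ) : ℝ) * Real.log k
      ≤ (n:ℝ) * Real.log n * A :=
    le_trans hS (mul_le_mul_of_nonneg_left hgeom (by positivity))
  have hfinal : (n:ℝ) * Real.log n * A + L * A ≤ Q^(n+1) * ((n:ℝ)+1) * L / (Q-1) := by
    have heq : Q^(n+1) * ((n:ℝ)+1) * L / (Q-1) = (((n:ℝ)+1) * L) * A := by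
      rw [hAdef]; ring
    rw [heq]
    have h1 : (n:ℝ) * Real.log n ≤ (n:ℝ) * L :=
      mul_le_mul_of_nonneg_left hlogn_le (by linarith)
    have h2 : (n:ℝ) * Real.log n + L ≤ ((n:ℝ)+1) * L := by nlinarith
    nlinarith
  rw [hcast (n+1)]
  calc (n : ℝ) * (3 * (n : ℝ) + 7) / 2 + Real.log n - 5
        + ∑ k ∈ Finset.Icc 2 n, (k : ℝ) * (((2 * Δ) ^ k : ℕ) : ℝ) * Real.log k
      < 2 * 2^n + (n:ℝ) * Real.log n * A := by linarith
    _ ≤ L * A + (n:ℝ) * Real.log n * A := by linarith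
    _ ≤ Q^(n+1) * ((n:ℝ)+1) * L / (Q-1) := by linarith
    _ ≤ Q^(n+1) * ((n:ℝ)+1) * L / Real.log Q := hRHS
end
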